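/- arXiv:math/0102073 — 2 statements merged into one kernel-verified Lean document; each statement's English description precedes it below -/
import Mathlib

section
/- For ν = 1, the polynomials F̃_{s,b}(L, q) (defined as multisums with q-binomial coefficients, which for ν=1 reduce to single sums) satisfy the recurrences F̃_{s,0}(L,q) = F̃_{s,1}(L-1,q) and F̃_{s,1}(L,q) = F̃_{s,0}(L-1,q) + F̃_{s,1}(L-1,q) + (q^{L-1}-1) F̃_{s,1}(L-2,q), with initial conditions F̃_{s,b}(0,q) = δ_{s,b}, for s, b ∈ {0,1}. -/
open Finset

/-- The formal variable `q` in the field of rational functions over `ℚ`. -/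
noncomputable def q : RatFunc ℚ := RatFunc.X

/-- Gaussian binomial coefficient `qbinom(N, K) = (q^{K+1}; q)_{N-K} / (q; q)_{N-K}`
in the variable `p`, with the convention of the paper: it is defined (by this formula)
whenever `N - K ≥ 0`, and is `0` otherwise.  (In particular `qbinom(-1, -1) = 1`.) -/
noncomputable def qbin (p : RatFunc ℚ) (N K : ℤ) : RatFunc ℚ :=
  if K ≤ N then
    (∏ j ∈ Finset.range (N - K).toNat, (1 - p ^ (K + 1 + (j : ℤ)))) /
    (∏ j ∈ Finset.range (N - K).toNat, (1 - p ^ ((j : ℤ) + 1)))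
  else 0

/-- For `ν = 1`: `F̃_{s,b}(L, q) = Σ_{n₁} q^{n₁² + χ(1>s)n₁} qbinom(n₁ + m₁, n₁)`, with
`m₁ = L - 2n₁ - χ(1>s)(1-s) - χ(1>b)(1-b)`, the sum running over all integers `n₁` for
which the q-binomial is nonzero (a `finsum` over `ℤ`). -/
noncomputable def Ft (s b : ℕ) (L : ℤ) : RatFunc ℚ :=
  ∑ᶠ n : ℤ,
    q ^ (n ^ 2 + (if s = 0 then n else 0)) *
      qbin q (n + (L - 2 * n - (if s = 0 then 1 else 0) - (if b = 0 then 1 else 0))) n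

lemma q_ne_zero : q ≠ 0 := RatFunc.X_ne_zero
/-!
With `c = χ(1>s)` and `d = χ(1>b)`, `F̃_{s,b}(L) = Fsum c (L - d)` for the single sum
`Fsum c L = Σₙ q^(n² + c n) qbinom(L - c - n, n)`. The first recurrence is then a reindexing, and
the second is `Fsum c L = Fsum c (L-1) + q^(L-1) Fsum c (L-2)`: apply the q-Pascal rule
`qbinom(N, n) = qbinom(N-1, n) + q^(N-n) qbinom(N-1, n-1)` termwise and shift `n ↦ n + 1` in the
second sum. Three initial values are single surviving terms; the fourth, `Fsum 1 (-1)`, is read off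
from the recurrence at `L = 1`.
-/

open Function

section QBinomial

variable {p : RatFunc ℚ}

lemma qbin_self (n : ℤ) : qbin p n n = 1 := by
  simp [qbin]

lemma qbin_of_lt {N K : ℤ} (h : N < K) : qbin p N K = 0 :=
  if_neg h.not_ge

/-- The factor `1 - p ^ 0` occurs in the numerator. -/
lemma qbin_of_neg_of_nonneg {N K : ℤ} (hK : K < 0) (hN : 0 ≤ N) : qbin p N K = 0 := by
  have hj : (-K - 1).toNat ∈ range (N - K).toNat := mem_range.mpr (by omega)
  rw [qbin, if_pos (by omega), prod_eq_zero hj, zero_div]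
  rw [show K + 1 + (((-K - 1).toNat : ℕ) : ℤ) = 0 by omega, zpow_zero, sub_self]

lemma le_and_nonneg_or_neg_of_qbin_ne_zero {N K : ℤ} (h : qbin p N K ≠ 0) :
    K ≤ N ∧ (0 ≤ K ∨ N < 0) := by
  by_contra hc
  rcases not_and_or.mp hc with hc | hc
  · exact h (qbin_of_lt (not_le.mp hc))
  · exact h (qbin_of_neg_of_nonneg (by omega) (by omega))

lemma finite_support_mul_qbin (g : ℤ → RatFunc ℚ) (A : ℤ) :
    (support fun n => g n * qbin p (A - n) n).Finite := by
  refine (Set.finite_Icc (min 0 (A + 1)) (max 0 A)).subset fun n hn => ?_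
  have := le_and_nonneg_or_neg_of_qbin_ne_zero (right_ne_zero_of_mul hn)
  simp only [Set.mem_Icc]
  omega

lemma one_sub_pow_succ_ne_zero (hp : ¬IsOfFinOrder p) (k : ℕ) : 1 - p ^ ((k : ℤ) + 1) ≠ 0 := by
  rw [sub_ne_zero, ne_comm, show (k : ℤ) + 1 = ((k + 1 : ℕ) : ℤ) by push_cast; ring, zpow_natCast]
  exact fun h => hp (isOfFinOrder_iff_pow_eq_one.mpr ⟨k + 1, k.succ_pos, h⟩)

lemma qbin_pascal_of_lt (hp0 : p ≠ 0) (hp : ¬IsOfFinOrder p) {N n : ℤ} (h : n < N) :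
    qbin p N n = qbin p (N - 1) n + p ^ (N - n) * qbin p (N - 1) (n - 1) := by
  obtain ⟨k, hk⟩ : ∃ k : ℕ, N - n = (k : ℤ) + 1 := ⟨(N - n - 1).toNat, by omega⟩
  simp only [qbin, if_pos h.le, if_pos (show n ≤ N - 1 by omega),
    if_pos (show n - 1 ≤ N - 1 by omega), show (N - n).toNat = k + 1 by omega,
    show (N - 1 - n).toNat = k by omega, show (N - 1 - (n - 1)).toNat = k + 1 by omega,
    sub_add_cancel]
  rw [hk]
  set D := ∏ j ∈ range k, (1 - p ^ ((j : ℤ) + 1))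
  set P := ∏ j ∈ range k, (1 - p ^ (n + 1 + (j : ℤ)))
  have hnum : ∏ j ∈ range (k + 1), (1 - p ^ (n + 1 + (j : ℤ))) =
      P * (1 - p ^ ((k : ℤ) + 1) * p ^ n) := by
    rw [prod_range_succ, ← zpow_add₀ hp0]
    congr 1
    ring_nf
  have hnum' : ∏ j ∈ range (k + 1), (1 - p ^ (n + (j : ℤ))) = P * (1 - p ^ n) := by
    rw [prod_range_succ', Nat.cast_zero, add_zero]
    congr 1
    exact prod_congr rfl fun j _ => by push_cast; ring_nf
  have hden : ∏ j ∈ range (k + 1), (1 - p ^ ((j : ℤ) + 1)) = D * (1 - p ^ ((k : ℤ) + 1)) :=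
    prod_range_succ _ _
  have hD : D ≠ 0 := prod_ne_zero_iff.mpr fun j _ => one_sub_pow_succ_ne_zero hp j
  have hk1 := one_sub_pow_succ_ne_zero hp k
  rw [hnum, hnum', hden]
  field_simp
  ring

lemma qbin_pascal (hp0 : p ≠ 0) (hp : ¬IsOfFinOrder p) (N n : ℤ) :
    qbin p N n = qbin p (N - 1) n + p ^ (N - n) * qbin p (N - 1) (n - 1) := by
  rcases lt_trichotomy N n with h | rfl | h
  · simp [qbin_of_lt h, qbin_of_lt (show N - 1 < n by omega),
      qbin_of_lt (show N - 1 < n - 1 by omega)]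
  · simp [qbin_self, qbin_of_lt (show N - 1 < N by omega)]
  · exact qbin_pascal_of_lt hp0 hp h

end QBinomial

lemma not_isOfFinOrder_q : ¬IsOfFinOrder q := by
  rw [isOfFinOrder_iff_pow_eq_one]
  rintro ⟨n, hn, h⟩
  have hX : (Polynomial.X : Polynomial ℚ) ^ n = 1 :=
    RatFunc.algebraMap_injective ℚ (by rw [map_pow, map_one, RatFunc.algebraMap_X]; exact h)
  simpa [hn.ne'] using congrArg Polynomial.natDegree hX

noncomputable def Fterm (c L n : ℤ) : RatFunc ℚ :=
  q ^ (n ^ 2 + c * n) * qbin q (L - c - n) n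

noncomputable def Fsum (c L : ℤ) : RatFunc ℚ :=
  ∑ᶠ n : ℤ, Fterm c L n

lemma Ft_eq_Fsum (s b : ℕ) (L : ℤ) :
    Ft s b L = Fsum (if s = 0 then 1 else 0) (L - if b = 0 then 1 else 0) := by
  refine finsum_congr fun n => ?_
  rw [Fterm]
  split_ifs <;> ring_nf

lemma finite_support_Fterm (c L : ℤ) : (support (Fterm c L)).Finite :=
  finite_support_mul_qbin _ (L - c)

lemma Fterm_pascal (c L n : ℤ) :
    Fterm c L n = Fterm c (L - 1) n + q ^ (L - 1) * Fterm c (L - 2) (n - 1) := by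
  have hq : q ≠ 0 := RatFunc.X_ne_zero
  simp only [Fterm]
  rw [qbin_pascal hq not_isOfFinOrder_q, mul_add, ← mul_assoc, ← mul_assoc, ← zpow_add₀ hq,
    ← zpow_add₀ hq]
  ring_nf

lemma Fsum_rec (c L : ℤ) : Fsum c L = Fsum c (L - 1) + q ^ (L - 1) * Fsum c (L - 2) := by
  have hshift : (support fun n => q ^ (L - 1) * Fterm c (L - 2) (n - 1)).Finite :=
    ((finite_support_Fterm c (L - 2)).preimage sub_left_injective.injOn).subset
      fun n hn => right_ne_zero_of_mul hn
  rw [Fsum, finsum_congr (Fterm_pascal c L), finsum_add_distrib (finite_support_Fterm c (L - 1))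
    hshift, Fsum, Fsum, mul_finsum]
  congr 1
  exact finsum_comp_equiv (Equiv.subRight 1) (f := fun n => q ^ (L - 1) * Fterm c (L - 2) n)

lemma Fsum_of_sub_eq_zero {c L : ℤ} (h : L - c = 0) : Fsum c L = 1 := by
  rw [Fsum, finsum_eq_single _ 0 fun n hn => ?_]
  · simp [Fterm, h, qbin_self]
  · have hqbin : qbin q (0 - n) n = 0 := by
      by_contra hne
      have := le_and_nonneg_or_neg_of_qbin_ne_zero hne
      omega
    rw [Fterm, h, hqbin, mul_zero]

lemma Fsum_of_sub_eq_neg_one {c L : ℤ} (h : L - c = -1) : Fsum c L = 0 := by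
  refine finsum_eq_zero_of_forall_eq_zero fun n => ?_
  have hqbin : qbin q (-1 - n) n = 0 := by
    by_contra hne
    have := le_and_nonneg_or_neg_of_qbin_ne_zero hne
    omega
  rw [Fterm, h, hqbin, mul_zero]

lemma Fsum_one_neg_one : Fsum 1 (-1) = 1 := by
  have h := Fsum_rec 1 1
  rw [Fsum_of_sub_eq_zero (by norm_num), Fsum_of_sub_eq_neg_one (by norm_num)] at h
  norm_num at h
  exact h.symm

/-- For `ν = 1` and `s, b ∈ {0,1}`, the polynomials `F̃_{s,b}(L, q)` satisfy
`F̃_{s,0}(L) = F̃_{s,1}(L-1)`,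
`F̃_{s,1}(L) = F̃_{s,0}(L-1) + F̃_{s,1}(L-1) + (q^{L-1}-1) F̃_{s,1}(L-2)`,
and the initial conditions `F̃_{s,b}(0) = δ_{s,b}`. -/
theorem stmt15 (s b : ℕ) (hs : s ≤ 1) (hb : b ≤ 1) :
    (∀ L : ℤ, Ft s 0 L = Ft s 1 (L - 1)) ∧
    (∀ L : ℤ, Ft s 1 L =
      Ft s 0 (L - 1) + Ft s 1 (L - 1) + (q ^ (L - 1) - 1) * Ft s 1 (L - 2)) ∧
    Ft s b 0 = (if s = b then 1 else 0) := by
  set c : ℤ := if s = 0 then 1 else 0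
  refine ⟨fun L => ?_, fun L => ?_, ?_⟩
  · simp [Ft_eq_Fsum]
  · simp only [Ft_eq_Fsum, if_true, one_ne_zero, if_false, sub_zero, sub_sub,
      show (1 : ℤ) + 1 = 2 by norm_num]
    linear_combination Fsum_rec c L
  · rw [Ft_eq_Fsum]
    interval_cases s <;> interval_cases b <;> norm_num
    · exact Fsum_one_neg_one
    · exact Fsum_of_sub_eq_neg_one (by norm_num)
    · exact Fsum_of_sub_eq_neg_one (by norm_num)
    · exact Fsum_of_sub_eq_zero (by norm_num)
end

section
/- For ν ≥ 1 and 0 ≤ s,b ≤ ν: F_{s,b}(L, L, q) = F̃_{b,s}(L, 1/q), i.e., the multisum polynomial with M = L equals the M = 0 polynomial with s and b interchanged and q replaced by 1/q. -/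
open Finset

/-- `N_{i+1} = n_{i+1} + ⋯ + n_ν` (the index `i : Fin ν` stands for the 1-based
index `i+1`). -/
def NS (ν : ℕ) (n : Fin ν → ℤ) (i : Fin ν) : ℤ :=
  ∑ j ∈ Finset.univ.filter (fun j => i ≤ j), n j

/-- `m_{i+1} = L - 2(N₁+⋯+N_{i+1}) - χ(i+1>s)(i+1-s) - χ(i+1>b)(i+1-b)`. -/
def mI (ν : ℕ) (s b : ℕ) (L : ℤ) (n : Fin ν → ℤ) (i : Fin ν) : ℤ :=
  L - 2 * (∑ k ∈ Finset.univ.filter (fun k => k ≤ i), NS ν n k)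
    - (if s < (i : ℕ) + 1 then ((i : ℕ) : ℤ) + 1 - s else 0)
    - (if b < (i : ℕ) + 1 then ((i : ℕ) : ℤ) + 1 - b else 0)

/-- `F_{s,b}(L, M, p)`: the multisum over integer vectors `n` of
`p^{(N₁²+⋯+N_ν²)+(N_{s+1}+⋯+N_ν) - M N₁} ∏_i qbinom(n_i + m_i, n_i)`
(a `finsum` over `Fin ν → ℤ`; only vectors with nonzero product of
q-binomials contribute).  Note `N₁ = n₁ + ⋯ + n_ν`. -/
noncomputable def FF (ν : ℕ) (p : RatFunc ℚ) (s b : ℕ) (L M : ℤ) : RatFunc ℚ :=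
  ∑ᶠ n : Fin ν → ℤ,
    p ^ ((∑ i, NS ν n i ^ 2)
        + (∑ i ∈ Finset.univ.filter (fun i : Fin ν => s ≤ (i : ℕ)), NS ν n i)
        - M * (∑ j, n j)) *
    ∏ i, qbin p (n i + mI ν s b L n i) (n i)

lemma mI_symm (ν s b : ℕ) (L : ℤ) (n : Fin ν → ℤ) (i : Fin ν) :
    mI ν s b L n i = mI ν b s L n i := by
  unfold mI; ring

lemma prod_zpow' {α : Type*} (b : RatFunc ℚ) (hb : b ≠ 0) (s : Finset α) (f : α → ℤ) :
    ∏ i ∈ s, b ^ f i = b ^ (∑ i ∈ s, f i) := by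
  induction s using Finset.cons_induction with
  | empty => simp
  | cons a s ha ih => rw [Finset.prod_cons, Finset.sum_cons, ih, zpow_add₀ hb]

lemma one_sub_inv_zpow (p : RatFunc ℚ) (hp : p ≠ 0) (e : ℤ) :
    1 - p⁻¹ ^ e = -(p ^ (-e)) * (1 - p ^ e) := by
  have h : p ^ (-e) * p ^ e = 1 := by
    rw [← zpow_add₀ hp]; simp
  rw [inv_zpow, ← zpow_neg]
  linear_combination -h

lemma qbin_inv (p : RatFunc ℚ) (hp : p ≠ 0) (N K : ℤ) :
    qbin p⁻¹ N K = p ^ (-(K * (N - K))) * qbin p N K := by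
  unfold qbin
  by_cases h : K ≤ N
  · simp only [h, if_true]
    set t := (N - K).toNat with ht
    have htz : (t : ℤ) = N - K := Int.toNat_of_nonneg (by omega)
    have hnum : ∏ j ∈ Finset.range t, (1 - p⁻¹ ^ (K + 1 + (j : ℤ)))
        = ((-1 : RatFunc ℚ) ^ t * p ^ (∑ j ∈ Finset.range t, -(K + 1 + (j : ℤ))))
          * ∏ j ∈ Finset.range t, (1 - p ^ (K + 1 + (j : ℤ))) := by
      have hc : ∀ j ∈ Finset.range t, (1 - p⁻¹ ^ (K + 1 + (j : ℤ)))
          = ((-1 : RatFunc ℚ) * p ^ (-(K + 1 + (j : ℤ)))) * (1 - p ^ (K + 1 + (j : ℤ))) := by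
        intro j _; rw [one_sub_inv_zpow p hp]; ring
      rw [Finset.prod_congr rfl hc, Finset.prod_mul_distrib, Finset.prod_mul_distrib,
        Finset.prod_const, prod_zpow' p hp, Finset.card_range]
    have hden : ∏ j ∈ Finset.range t, (1 - p⁻¹ ^ ((j : ℤ) + 1))
        = ((-1 : RatFunc ℚ) ^ t * p ^ (∑ j ∈ Finset.range t, -((j : ℤ) + 1)))
          * ∏ j ∈ Finset.range t, (1 - p ^ ((j : ℤ) + 1)) := by
      have hc : ∀ j ∈ Finset.range t, (1 - p⁻¹ ^ ((j : ℤ) + 1))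
          = ((-1 : RatFunc ℚ) * p ^ (-((j : ℤ) + 1))) * (1 - p ^ ((j : ℤ) + 1)) := by
        intro j _; rw [one_sub_inv_zpow p hp]; ring
      rw [Finset.prod_congr rfl hc, Finset.prod_mul_distrib, Finset.prod_mul_distrib,
        Finset.prod_const, prod_zpow' p hp, Finset.card_range]
    rw [hnum, hden, mul_div_mul_comm, mul_div_mul_comm,
      div_self (pow_ne_zero t (by norm_num : (-1 : RatFunc ℚ) ≠ 0)), one_mul,
      ← zpow_sub₀ hp]
    congr 2
    rw [← Finset.sum_sub_distrib]
    have : ∀ j ∈ Finset.range t, (-(K + 1 + (j : ℤ)) - -((j : ℤ) + 1)) = -K :=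
      fun j _ => by ring
    rw [Finset.sum_congr rfl this, Finset.sum_const, Finset.card_range,
      nsmul_eq_mul, htz]
    ring
  · simp [h]

lemma L1 (ν : ℕ) (n : Fin ν → ℤ) :
    ∑ i, n i * (∑ k ∈ Finset.univ.filter (fun k => k ≤ i), NS ν n k)
      = ∑ k, NS ν n k ^ 2 := by
  simp_rw [Finset.sum_filter, Finset.mul_sum]
  rw [Finset.sum_comm]
  refine Finset.sum_congr rfl fun k _ => ?_
  have h1 : ∀ i : Fin ν, n i * (if k ≤ i then NS ν n k else 0)
      = (if k ≤ i then n i else 0) * NS ν n k := by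
    intro i; split_ifs <;> ring
  simp_rw [h1]
  rw [← Finset.sum_mul, ← Finset.sum_filter, sq, NS]

lemma L2 (ν c : ℕ) (n : Fin ν → ℤ) :
    ∑ i : Fin ν, n i * (if c < (i : ℕ) + 1 then ((i : ℕ) : ℤ) + 1 - c else 0)
      = ∑ i ∈ Finset.univ.filter (fun i : Fin ν => c ≤ (i : ℕ)), NS ν n i := by
  have hcount : ∀ i : Fin ν, (if c < (i : ℕ) + 1 then ((i : ℕ) : ℤ) + 1 - c else 0)
      = ∑ k : Fin ν, (if c ≤ (k : ℕ) ∧ (k : ℕ) ≤ (i : ℕ) then (1 : ℤ) else 0) := by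
    intro i
    rw [Fin.sum_univ_eq_sum_range (fun k => if c ≤ k ∧ k ≤ (i : ℕ) then (1 : ℤ) else 0)]
    rw [← Finset.sum_filter]
    have hfe : (Finset.range ν).filter (fun k => c ≤ k ∧ k ≤ (i : ℕ))
        = Finset.Icc c (i : ℕ) := by
      ext k
      simp only [Finset.mem_filter, Finset.mem_range, Finset.mem_Icc]
      have := i.isLt; omega
    rw [hfe, Finset.sum_const, Nat.card_Icc, nsmul_eq_mul, mul_one]
    split_ifs <;> omega
  simp_rw [hcount, Finset.mul_sum]
  rw [Finset.sum_comm, Finset.sum_filter]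
  refine Finset.sum_congr rfl fun k _ => ?_
  by_cases hc : c ≤ (k : ℕ)
  · simp only [hc, true_and, if_true]
    rw [NS, Finset.sum_filter]
    refine Finset.sum_congr rfl fun i _ => ?_
    simp only [Fin.le_def]
    split_ifs <;> simp
  · simp [hc]

lemma expo (ν s b : ℕ) (L : ℤ) (n : Fin ν → ℤ) :
    ((∑ i, NS ν n i ^ 2)
        + (∑ i ∈ Finset.univ.filter (fun i : Fin ν => s ≤ (i : ℕ)), NS ν n i)
        - L * (∑ j, n j))
      + (∑ i, n i * mI ν s b L n i)
    = -((∑ i, NS ν n i ^ 2)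
        + (∑ i ∈ Finset.univ.filter (fun i : Fin ν => b ≤ (i : ℕ)), NS ν n i)
        - 0 * (∑ j, n j)) := by
  have h1 := L1 ν n
  have h2s := L2 ν s n
  have h2b := L2 ν b n
  have hm : ∑ i, n i * mI ν s b L n i
      = L * (∑ j, n j) - 2 * (∑ k, NS ν n k ^ 2)
        - (∑ i, n i * (if s < (i : ℕ) + 1 then ((i : ℕ) : ℤ) + 1 - s else 0))
        - (∑ i, n i * (if b < (i : ℕ) + 1 then ((i : ℕ) : ℤ) + 1 - b else 0)) := by
    have hterm : ∀ i : Fin ν, n i * mI ν s b L n i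
        = n i * L
          - 2 * (n i * (∑ k ∈ Finset.univ.filter (fun k => k ≤ i), NS ν n k))
          - n i * (if s < (i : ℕ) + 1 then ((i : ℕ) : ℤ) + 1 - s else 0)
          - n i * (if b < (i : ℕ) + 1 then ((i : ℕ) : ℤ) + 1 - b else 0) := by
      intro i; rw [mI]; ring
    rw [Finset.sum_congr rfl fun i _ => hterm i]
    rw [Finset.sum_sub_distrib, Finset.sum_sub_distrib, Finset.sum_sub_distrib,
      ← Finset.mul_sum, L1, ← Finset.sum_mul, mul_comm]
  rw [hm, h2s, h2b]
  ring

/-- For `ν ≥ 1` and `0 ≤ s, b ≤ ν`: `F_{s,b}(L, L, q) = F̃_{b,s}(L, 1/q)`, i.e. the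
multisum with `M = L` equals the `M = 0` multisum with `s, b` interchanged and `q ↦ 1/q`. -/
theorem stmt18 (ν : ℕ) (hν : 1 ≤ ν) (s b : ℕ) (hs : s ≤ ν) (hb : b ≤ ν) (L : ℤ) :
    FF ν q s b L L = FF ν q⁻¹ b s L 0 := by
  have hq : q ≠ 0 := RatFunc.X_ne_zero
  have hqi : (q⁻¹ : RatFunc ℚ) ≠ 0 := inv_ne_zero hq
  rw [FF, FF]
  apply finsum_congr
  intro n
  have hterm : ∀ i : Fin ν, qbin q (n i + mI ν s b L n i) (n i)
      = q⁻¹ ^ (-(n i * mI ν s b L n i)) * qbin q⁻¹ (n i + mI ν b s L n i) (n i) := by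
    intro i
    have h := qbin_inv q⁻¹ hqi (n i + mI ν s b L n i) (n i)
    rw [inv_inv] at h
    have he : n i + mI ν s b L n i - n i = mI ν s b L n i := by ring
    rw [he] at h
    rw [h, mI_symm]
  rw [show (∏ i, qbin q (n i + mI ν s b L n i) (n i))
      = (∏ i, (q⁻¹ : RatFunc ℚ) ^ (-(n i * mI ν s b L n i)))
        * ∏ i, qbin q⁻¹ (n i + mI ν b s L n i) (n i) from by
    rw [← Finset.prod_mul_distrib]; exact Finset.prod_congr rfl fun i _ => hterm i]
  rw [prod_zpow' _ hqi]
  rw [inv_zpow, inv_zpow, ← zpow_neg, ← zpow_neg, ← mul_assoc, ← zpow_add₀ hq]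
  congr 2
  have hsum : (∑ i, -(n i * mI ν s b L n i)) = -(∑ i, n i * mI ν s b L n i) := by
    rw [Finset.sum_neg_distrib]
  rw [hsum]
  have := expo ν s b L n
  linarith
end
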